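/- arXiv:1105.3991 — 2 statements merged into one kernel-verified Lean document; each statement's English description precedes it below -/
import Mathlib

section
/- Let (R,m,k) be a local ring with e = edim R and d = depth R, fix a Cohen presentation R̂ ≅ P/I, and set l = dim_k(I/pI) - 1. Assume there exist polynomials f(t), g(t) ∈ ℤ[t] such that g(t)·P^R_k(t) = (1+t)^{e-1} and g(t)·I^R(t) = t^d·f(t) as formal power series. Suppose moreover that s ≥ 0 is an integer for which (1-t²)^{l+1}·P^R_k(t) = (1+t)^e·(1+t³)^s·(1 + Σ_{j≥3} c_j t^j) with all c_j ≥ 0 (in the paper this holds for every s with 0 ≤ s ≤ m - p, by the structure theorem for Poincaré series of local rings). Let Σ_{i≥0} b_i t^i ∈ ℤ[[t]] be the power series with (1-t²)²·(Σ b_i t^i) = f(t)·(1+t³)^s. Then μ^d_R = b_0, μ^{d+1}_R - μ^d_R = b_1, and μ^{d+2}_R - μ^{d+1}_R = b_2 + (l-2)b_0. Moreover, if l ≥ 2 and b_i ≥ 0 for all i ≥ 1, then μ^{d+i}_R - μ^{d+i-1}_R ≥ b_i + (l-2)b_{i-2} ≥ b_i for all i ≥ 2. -/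
open CategoryTheory Opposite IsLocalRing PowerSeries

noncomputable section

/-- The length of a module, as the Krull dimension of its submodule lattice,
truncated to a natural number.  For a module annihilated by the maximal ideal of
a local ring this equals its dimension as a vector space over the residue field. -/
def ldim (R M : Type) [Ring R] [AddCommGroup M] [Module R M] : ℕ :=
  ((Order.krullDim (Submodule R M)).unbotD 0).toNat

/-- `Ext_R^i(k, R)` for a local ring `R` with residue field `k`. -/
def extKR (R : Type) [CommRing R] [IsLocalRing R] (i : ℕ) : ModuleCat R :=
  ((Ext R (ModuleCat R) i).obj (op (ModuleCat.of R (ResidueField R)))).obj (ModuleCat.of R R)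

/-- The `i`-th Bass number `μ^i_R = dim_k Ext^i_R(k, R)`. -/
def bassNum (R : Type) [CommRing R] [IsLocalRing R] (i : ℕ) : ℕ :=
  ldim R (extKR R i)

/-- `depth R = inf { i | Ext^i_R(k,R) ≠ 0 }`. -/
def depthR (R : Type) [CommRing R] [IsLocalRing R] : ℕ :=
  sInf {i : ℕ | ¬ Subsingleton (extKR R i)}

/-- `Tor^R_i(k, k)`. -/
def torKK (R : Type) [CommRing R] [IsLocalRing R] (i : ℕ) : ModuleCat R :=
  ((Tor (ModuleCat R) i).obj (ModuleCat.of R (ResidueField R))).obj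
    (ModuleCat.of R (ResidueField R))

/-- The Poincaré series `P^R_k(t) = Σ_i dim_k Tor^R_i(k,k) tⁱ ∈ ℤ[[t]]`. -/
def poincareK (R : Type) [CommRing R] [IsLocalRing R] : PowerSeries ℤ :=
  PowerSeries.mk fun i => (ldim R (torKK R i) : ℤ)

/-- The Bass series `I^R(t) = Σ_i μ^i_R tⁱ ∈ ℤ[[t]]`. -/
def bassSeries (R : Type) [CommRing R] [IsLocalRing R] : PowerSeries ℤ :=
  PowerSeries.mk fun i => (bassNum R i : ℤ)

/-- The embedding dimension `edim R = dim_k m/m²`. -/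
def edim (R : Type) [CommRing R] [IsLocalRing R] : ℕ :=
  ldim R (maximalIdeal R).Cotangent

/-- A Noetherian local ring is regular when its Krull dimension equals its
embedding dimension. -/
def IsRegLocal (P : Type) [CommRing P] [IsLocalRing P] : Prop :=
  IsNoetherianRing P ∧ ringKrullDim P = (edim P : WithBot ℕ∞)

/-- The minimal number of generators of an ideal `I` of a local ring,
`dim_k I/pI`. -/
def minGensIdeal (P : Type) [CommRing P] [IsLocalRing P] (I : Ideal P) : ℕ :=
  ldim P (↥I ⧸ (maximalIdeal P • (⊤ : Submodule P ↥I)))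

/-- `I` is generated by a regular sequence. -/
def Ideal.IsGenRegularSeq {P : Type} [CommRing P] (I : Ideal P) : Prop :=
  ∃ rs : List P, RingTheory.Sequence.IsRegular P rs ∧ I = Ideal.span {x | x ∈ rs}

/-- A Cohen presentation `R̂ ≅ P/I` of a local ring `R`: `P` is a regular local ring
whose dimension is the embedding dimension of `R`, and `I ⊆ p²`. -/
structure CohenPresentation (R : Type) [CommRing R] [IsLocalRing R] : Type 1 where
  P : Type
  [commRing : CommRing P]
  [isLocal : IsLocalRing P]
  regular : IsRegLocal P
  I : Ideal P
  hI : I ≤ maximalIdeal P ^ 2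
  dimP : ringKrullDim P = (edim R : WithBot ℕ∞)
  iso : AdicCompletion (maximalIdeal R) R ≃+* P ⧸ I

attribute [instance] CohenPresentation.commRing CohenPresentation.isLocal

/-- `l + 1 = dim_k I/pI` for a Cohen presentation. -/
def CohenPresentation.minGens {R : Type} [CommRing R] [IsLocalRing R]
    (cp : CohenPresentation R) : ℕ :=
  minGensIdeal cp.P cp.I

/-- `R` is a complete intersection: in a Cohen presentation `R̂ ≅ P/I` the ideal `I`
is generated by a `P`-regular sequence. -/
def IsCompleteIntersection (R : Type) [CommRing R] [IsLocalRing R] : Prop :=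
  ∃ cp : CohenPresentation R, cp.I.IsGenRegularSeq

/-- `R` is Gorenstein: `R` is Cohen–Macaulay and `μ^{depth R}_R = 1`
(equivalently, `R` has finite injective dimension over itself). -/
def IsGorensteinLocal (R : Type) [CommRing R] [IsLocalRing R] : Prop :=
  ringKrullDim R = (depthR R : WithBot ℕ∞) ∧ bassNum R (depthR R) = 1

/-!
Put `J(t) = Σ μ^{d+i} tⁱ`, so that `I^R(t) = t^d J(t)` and `g J = f`. Since `1 + t` and `1 - t²`
are units of `ℤ[[t]]`, eliminating `g` and `P^R_k` from the hypotheses gives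
`(1 - t²)^{l+1} J = (1 + t)(1 - t²)² C B` with `C = Σ cⱼ tʲ = 1 + O(t³)` and `B = Σ bᵢ tⁱ`;
this uses `e ≥ 1`, which holds because `e = 0` would make the regular ring `P` a field and force
`I = 0`. Reading off the coefficients of `1, t, t²` gives the three equalities. For `l ≥ 2` the
identity becomes `(1 - t²)^{l-2} (1 - t) J = C B`: the series `(1 - t) J` of consecutive
differences is obtained from `C B ≥ B ≥ 0` by dividing `l - 2` times by `1 - t²`, and each division
keeps coefficients nonnegative while adding the coefficient two places back.
-/

lemma ldim_eq_toNat_length (R M : Type) [Ring R] [AddCommGroup M] [Module R M] :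
    ldim R M = (Module.length R M).toNat := by
  rw [ldim, ← Module.coe_length, WithBot.unbotD_coe]

lemma ldim_eq_zero (R M : Type) [Ring R] [AddCommGroup M] [Module R M] [Subsingleton M] :
    ldim R M = 0 := by
  rw [ldim_eq_toNat_length, Module.length_eq_zero, ENat.toNat_zero]

lemma edim_eq_finrank_cotangentSpace (R : Type) [CommRing R] [IsLocalRing R]
    [IsNoetherianRing R] : edim R = Module.finrank (ResidueField R) (CotangentSpace R) := by
  rw [edim, ldim_eq_toNat_length, Module.length_eq_of_surjective (S := R)
    (R := ResidueField R) (M := CotangentSpace R) residue_surjective,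
    Module.length_eq_finrank, ENat.toNat_natCast]

lemma isField_of_edim_eq_zero {R : Type} [CommRing R] [IsLocalRing R] [IsNoetherianRing R]
    (h : edim R = 0) : IsField R :=
  finrank_cotangentSpace_eq_zero_iff.mp (edim_eq_finrank_cotangentSpace R ▸ h)

lemma CohenPresentation.one_le_edim {R : Type} [CommRing R] [IsLocalRing R]
    (cp : CohenPresentation R) (h : cp.minGens ≠ 0) : 1 ≤ edim R := by
  by_contra! he
  have : IsNoetherianRing cp.P := cp.regular.1
  have hP : edim cp.P = 0 := by
    have := cp.regular.2.symm.trans cp.dimP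
    rw [Nat.lt_one_iff.mp he] at this
    exact_mod_cast this
  have hm : maximalIdeal cp.P = ⊥ :=
    isField_iff_maximalIdeal_eq.mp (isField_of_edim_eq_zero hP)
  have hI : cp.I = ⊥ := le_bot_iff.mp (by simpa [hm] using cp.hI)
  apply h
  rw [CohenPresentation.minGens, minGensIdeal, hI]
  exact ldim_eq_zero _ _

lemma bassNum_eq_zero_of_lt_depthR {R : Type} [CommRing R] [IsLocalRing R] {i : ℕ}
    (hi : i < depthR R) : bassNum R i = 0 := by
  have : Subsingleton (extKR R i) := not_not.mp (Nat.notMem_of_lt_sInf hi)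
  exact ldim_eq_zero R _

lemma bassSeries_eq_X_pow_depthR_mul (R : Type) [CommRing R] [IsLocalRing R] :
    bassSeries R = X ^ depthR R * mk fun i => (bassNum R (depthR R + i) : ℤ) := by
  ext n
  rw [coeff_X_pow_mul', bassSeries, coeff_mk]
  split_ifs with h
  · rw [coeff_mk, Nat.add_sub_cancel' h]
  · rw [bassNum_eq_zero_of_lt_depthR (not_le.mp h), Nat.cast_zero]

namespace PowerSeries

section CommRing

variable {A : Type*} [CommRing A]

lemma isUnit_one_add_X : IsUnit (1 + X : A⟦X⟧) :=
  isUnit_iff_constantCoeff.mpr (by simp)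

lemma isUnit_one_sub_X_sq : IsUnit (1 - X ^ 2 : A⟦X⟧) :=
  isUnit_iff_constantCoeff.mpr (by simp)

lemma coeff_two_mul (φ ψ : A⟦X⟧) : coeff 2 (φ * ψ) =
    coeff 0 φ * coeff 2 ψ + coeff 1 φ * coeff 1 ψ + coeff 2 φ * coeff 0 ψ := by
  simp [coeff_mul, Finset.Nat.antidiagonal_succ, add_assoc]

lemma coeff_one_and_two_one_sub_X_sq_pow (k : ℕ) :
    coeff 1 ((1 - X ^ 2 : A⟦X⟧) ^ k) = 0 ∧ coeff 2 ((1 - X ^ 2 : A⟦X⟧) ^ k) = -k := by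
  induction k with
  | zero => simp [coeff_one]
  | succ k ih =>
    rw [pow_succ (1 - X ^ 2) k]
    exact ⟨by simp [coeff_one_mul, ih.1, coeff_X_pow],
      by simp [coeff_two_mul, ih.1, ih.2, coeff_X_pow]⟩

lemma coeff_one_sub_X_sq_mul_of_lt {i : ℕ} (hi : i < 2) (φ : A⟦X⟧) :
    coeff i ((1 - X ^ 2) * φ) = coeff i φ := by
  rw [sub_mul, one_mul, map_sub, coeff_X_pow_mul', if_neg (by omega), sub_zero]

lemma coeff_add_two_one_sub_X_sq_mul (i : ℕ) (φ : A⟦X⟧) :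
    coeff (i + 2) ((1 - X ^ 2) * φ) = coeff (i + 2) φ - coeff i φ := by
  rw [sub_mul, one_mul, map_sub, coeff_X_pow_mul', if_pos (by omega), Nat.add_sub_cancel]

lemma mk_eq_one_add_X_pow_three_mul {c : ℕ → A} (hc0 : c 0 = 1) (hc1 : c 1 = 0)
    (hc2 : c 2 = 0) : mk c = 1 + X ^ 3 * mk fun j => c (j + 3) := by
  ext (_ | _ | _ | n) <;> simp [coeff_X_pow_mul', coeff_one, *]

lemma coeff_one_add_X_pow_mul_mul_of_lt {i n : ℕ} (hi : i < n) (φ ψ : A⟦X⟧) :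
    coeff i ((1 + X ^ n * φ) * ψ) = coeff i ψ := by
  rw [add_mul, one_mul, map_add, mul_assoc, coeff_X_pow_mul', if_neg (by omega), add_zero]

lemma one_sub_X_sq_pow_mul_eq_of_mul_eq {G P J F T C B : A⟦X⟧} {n m : ℕ}
    (hG : G * P = (1 + X) ^ n) (hJ : G * J = F)
    (hP : (1 - X ^ 2) ^ m * P = (1 + X) ^ (n + 1) * T * C)
    (hB : (1 - X ^ 2) ^ 2 * B = F * T) :
    (1 - X ^ 2) ^ m * J = (1 + X) * (1 - X ^ 2) ^ 2 * (C * B) := by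
  apply (isUnit_one_add_X.pow n).mul_left_cancel
  linear_combination (-((1 - X ^ 2) ^ m * J)) * hG + G * J * hP
    + (1 + X) ^ (n + 1) * T * C * hJ - (1 + X) ^ (n + 1) * C * hB

lemma coeff_zero_one_two_of_one_sub_X_sq_pow_mul_eq {J E : A⟦X⟧} {m : ℕ}
    (h : (1 - X ^ 2) ^ (m + 1) * J = (1 + X) * (1 - X ^ 2) ^ 2 * E) :
    coeff 0 J = coeff 0 E ∧ coeff 1 J = coeff 0 E + coeff 1 E ∧
      coeff 2 J = coeff 2 E + coeff 1 E + ((m : A) - 1) * coeff 0 E := by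
  obtain ⟨u1, u2⟩ := coeff_one_and_two_one_sub_X_sq_pow (A := A) (m + 1)
  obtain ⟨v1, v2⟩ := coeff_one_and_two_one_sub_X_sq_pow (A := A) 2
  have h0 := congrArg (coeff 0) h
  have h1 := congrArg (coeff 1) h
  have h2 := congrArg (coeff 2) h
  simp only [coeff_two_mul, coeff_one_mul, coeff_zero_eq_constantCoeff, map_mul] at h0 h1 h2
  simp [u1, u2, v1, v2, coeff_one, coeff_X] at h0 h1 h2
  simp only [coeff_zero_eq_constantCoeff_apply]
  exact ⟨h0, h1, by linear_combination h2 + (1 + (m : A)) * h0⟩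

lemma one_sub_X_sq_pow_mul_one_sub_X_mul_eq {J E : A⟦X⟧} {m : ℕ}
    (h : (1 - X ^ 2) ^ (m + 3) * J = (1 + X) * (1 - X ^ 2) ^ 2 * E) :
    (1 - X ^ 2) ^ m * ((1 - X) * J) = E := by
  apply (isUnit_one_add_X.mul (isUnit_one_sub_X_sq.pow 2)).mul_left_cancel
  linear_combination h

end CommRing

lemma coeff_mul_nonneg {A : Type*} [Semiring A] [PartialOrder A] [IsOrderedRing A]
    {φ ψ : A⟦X⟧} (hφ : ∀ i, 0 ≤ coeff i φ) (hψ : ∀ i, 0 ≤ coeff i ψ) (n : ℕ) :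
    0 ≤ coeff n (φ * ψ) := by
  rw [coeff_mul]
  exact Finset.sum_nonneg fun p _ => mul_nonneg (hφ p.1) (hψ p.2)

section OrderedCommRing

variable {A : Type*} [CommRing A] [PartialOrder A] [IsOrderedRing A]

lemma coeff_le_coeff_one_add_X_pow_mul_mul {φ ψ : A⟦X⟧} (hφ : ∀ i, 0 ≤ coeff i φ)
    (hψ : ∀ i, 0 ≤ coeff i ψ) (n i : ℕ) : coeff i ψ ≤ coeff i ((1 + X ^ n * φ) * ψ) := by
  rw [add_mul, one_mul, map_add, mul_assoc, le_add_iff_nonneg_right, coeff_X_pow_mul']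
  split_ifs
  · exact coeff_mul_nonneg hφ hψ _
  · exact le_rfl

lemma coeff_le_of_one_sub_X_sq_mul_eq {D E : A⟦X⟧} (hE : ∀ i, 0 ≤ coeff i E)
    (h : (1 - X ^ 2) * D = E) (i : ℕ) : coeff i E ≤ coeff i D := by
  subst h
  induction i using Nat.twoStepInduction with
  | zero => rw [coeff_one_sub_X_sq_mul_of_lt (by omega)]
  | one => rw [coeff_one_sub_X_sq_mul_of_lt (by omega)]
  | more i ih _ =>
    rw [coeff_add_two_one_sub_X_sq_mul, sub_le_self_iff]
    exact (hE i).trans ih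

lemma coeff_le_of_one_sub_X_sq_pow_mul_eq {E : A⟦X⟧} (hE : ∀ i, 0 ≤ coeff i E) (n : ℕ)
    {D : A⟦X⟧} (h : (1 - X ^ 2) ^ n * D = E) :
    (∀ i, coeff i E ≤ coeff i D) ∧ ∀ i, coeff (i + 2) E + n * coeff i E ≤ coeff (i + 2) D := by
  induction n generalizing D with
  | zero =>
    subst h
    simp
  | succ n ih =>
    obtain ⟨hED', hshift⟩ := ih (D := (1 - X ^ 2) * D) (by rw [← h]; ring)
    have hD'D := coeff_le_of_one_sub_X_sq_mul_eq (fun i => (hE i).trans (hED' i)) rfl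
    refine ⟨fun i => (hED' i).trans (hD'D i), fun i => ?_⟩
    have hD : coeff (i + 2) D = coeff (i + 2) ((1 - X ^ 2) * D) + coeff i D := by
      rw [coeff_add_two_one_sub_X_sq_mul, sub_add_cancel]
    rw [hD, Nat.cast_succ, add_one_mul, ← add_assoc]
    exact add_le_add (hshift i) ((hED' i).trans (hD'D i))

lemma coeff_add_two_add_mul_le_coeff_one_sub_X_mul {J φ ψ : A⟦X⟧} {m : ℕ}
    (hφ : ∀ i, 0 ≤ coeff i φ) (hψ : ∀ i, 0 ≤ coeff i ψ)
    (h : (1 - X ^ 2) ^ (m + 3) * J = (1 + X) * (1 - X ^ 2) ^ 2 * ((1 + X ^ 3 * φ) * ψ))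
    (j : ℕ) : coeff (j + 2) ψ + m * coeff j ψ ≤ coeff (j + 2) ((1 - X) * J) := by
  have hψE := coeff_le_coeff_one_add_X_pow_mul_mul hφ hψ 3
  obtain ⟨-, hED⟩ := coeff_le_of_one_sub_X_sq_pow_mul_eq (fun i => (hψ i).trans (hψE i)) m
    (one_sub_X_sq_pow_mul_one_sub_X_mul_eq h)
  exact (add_le_add (hψE _) (mul_le_mul_of_nonneg_left (hψE j) m.cast_nonneg)).trans (hED j)

end OrderedCommRing

end PowerSeries

theorem bass_number_differences_from_rational_expression'_general
    (R : Type) [CommRing R] [IsLocalRing R]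
    (cp : CohenPresentation R) (l : ℕ) (hl : cp.minGens = l + 1)
    (f g : Polynomial ℤ)
    (hg : (g : PowerSeries ℤ) * poincareK R = (1 + X) ^ (edim R - 1))
    (hf : (g : PowerSeries ℤ) * bassSeries R = X ^ (depthR R) * (f : PowerSeries ℤ))
    (s : ℕ) (c : ℕ → ℤ)
    (hc0 : c 0 = 1) (hc1 : c 1 = 0) (hc2 : c 2 = 0)
    (hcnn : ∀ j, 3 ≤ j → 0 ≤ c j)
    (hserre : (1 - X ^ 2) ^ (l + 1) * poincareK R
      = (1 + X) ^ (edim R) * (1 + X ^ 3) ^ s * PowerSeries.mk c)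
    (b : ℕ → ℤ)
    (hb : (1 - X ^ 2) ^ 2 * PowerSeries.mk b = (f : PowerSeries ℤ) * (1 + X ^ 3) ^ s) :
    (bassNum R (depthR R) : ℤ) = b 0 ∧
    (bassNum R (depthR R + 1) : ℤ) - (bassNum R (depthR R) : ℤ) = b 1 ∧
    (bassNum R (depthR R + 2) : ℤ) - (bassNum R (depthR R + 1) : ℤ)
      = b 2 + ((l : ℤ) - 2) * b 0 ∧
    (2 ≤ l → (∀ i, 1 ≤ i → 0 ≤ b i) → ∀ i, 2 ≤ i →
      (bassNum R (depthR R + i) : ℤ) - (bassNum R (depthR R + i - 1) : ℤ)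
          ≥ b i + ((l : ℤ) - 2) * b (i - 2) ∧
        b i + ((l : ℤ) - 2) * b (i - 2) ≥ b i) := by
  set d := depthR R
  set J : ℤ⟦X⟧ := mk fun i => (bassNum R (d + i) : ℤ)
  have hgJ : (g : ℤ⟦X⟧) * J = f :=
    X_pow_mul_cancel (k := d) (by rw [← hf, bassSeries_eq_X_pow_depthR_mul]; ring)
  have hserre' : (1 - X ^ 2) ^ (l + 1) * poincareK R
      = (1 + X) ^ (edim R - 1 + 1) * (1 + X ^ 3) ^ s * mk c := by
    rwa [Nat.sub_add_cancel (cp.one_le_edim (by omega))]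
  have hmain := one_sub_X_sq_pow_mul_eq_of_mul_eq hg hgJ hserre' hb
  rw [mk_eq_one_add_X_pow_three_mul hc0 hc1 hc2] at hmain
  obtain ⟨h0, h1, h2⟩ := coeff_zero_one_two_of_one_sub_X_sq_pow_mul_eq hmain
  simp (disch := norm_num) only [coeff_one_add_X_pow_mul_mul_of_lt, J, coeff_mk, Nat.add_zero]
    at h0 h1 h2
  refine ⟨h0, by linear_combination h1 - h0, by linear_combination h2 - h1, ?_⟩
  intro hl2 hb_pos i hi
  obtain ⟨m, rfl⟩ := Nat.exists_eq_add_of_le' hl2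
  obtain ⟨j, rfl⟩ := Nat.exists_eq_add_of_le' hi
  have hb_nonneg : ∀ i, 0 ≤ b i
    | 0 => h0 ▸ Nat.cast_nonneg _
    | i + 1 => hb_pos (i + 1) (Nat.le_add_left 1 i)
  have hdiff := coeff_add_two_add_mul_le_coeff_one_sub_X_mul (ψ := mk b)
    (fun i => by simpa using hcnn (i + 3) (by omega)) (fun i => by simpa using hb_nonneg i)
    hmain j
  simp only [sub_mul, one_mul, map_sub, coeff_succ_X_mul, J, coeff_mk] at hdiff
  rw [show d + (j + 2) - 1 = d + (j + 1) by omega, Nat.add_sub_cancel]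
  push_cast
  rw [add_sub_cancel_right]
  exact ⟨hdiff, le_add_of_nonneg_right (mul_nonneg m.cast_nonneg (hb_nonneg j))⟩

/-- Suppose `g(t)·P^R_k(t) = (1+t)^{e-1}` and `g(t)·I^R(t) = t^d·f(t)` for
polynomials `f, g ∈ ℤ[t]`, and suppose `s ≥ 0` is an integer with
`(1-t²)^{l+1}·P^R_k(t) = (1+t)^e·(1+t³)^s·(1 + Σ_{j≥3} c_j t^j)` where all `c_j ≥ 0`.
Let `Σ bᵢ tⁱ` be the Taylor expansion of `f(t)(1+t³)^s/(1-t²)²`.  Then `μ^d = b₀`,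
`μ^{d+1} - μ^d = b₁`, `μ^{d+2} - μ^{d+1} = b₂ + (l-2)b₀`, and if `l ≥ 2` and `bᵢ ≥ 0`
for `i ≥ 1` then `μ^{d+i} - μ^{d+i-1} ≥ bᵢ + (l-2)b_{i-2} ≥ bᵢ` for all `i ≥ 2`. -/
theorem bass_number_differences_from_rational_expression'
    (R : Type) [CommRing R] [IsNoetherianRing R] [IsLocalRing R]
    (cp : CohenPresentation R) (l : ℕ) (hl : cp.minGens = l + 1)
    (f g : Polynomial ℤ)
    (hg : (g : PowerSeries ℤ) * poincareK R = (1 + X) ^ (edim R - 1))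
    (hf : (g : PowerSeries ℤ) * bassSeries R = X ^ (depthR R) * (f : PowerSeries ℤ))
    (s : ℕ) (c : ℕ → ℤ)
    (hc0 : c 0 = 1) (hc1 : c 1 = 0) (hc2 : c 2 = 0)
    (hcnn : ∀ j, 3 ≤ j → 0 ≤ c j)
    (hserre : (1 - X ^ 2) ^ (l + 1) * poincareK R
      = (1 + X) ^ (edim R) * (1 + X ^ 3) ^ s * PowerSeries.mk c)
    (b : ℕ → ℤ)
    (hb : (1 - X ^ 2) ^ 2 * PowerSeries.mk b = (f : PowerSeries ℤ) * (1 + X ^ 3) ^ s) :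
    (bassNum R (depthR R) : ℤ) = b 0 ∧
    (bassNum R (depthR R + 1) : ℤ) - (bassNum R (depthR R) : ℤ) = b 1 ∧
    (bassNum R (depthR R + 2) : ℤ) - (bassNum R (depthR R + 1) : ℤ)
      = b 2 + ((l : ℤ) - 2) * b 0 ∧
    (2 ≤ l → (∀ i, 1 ≤ i → 0 ≤ b i) → ∀ i, 2 ≤ i →
      (bassNum R (depthR R + i) : ℤ) - (bassNum R (depthR R + i - 1) : ℤ)
          ≥ b i + ((l : ℤ) - 2) * b (i - 2) ∧
        b i + ((l : ℤ) - 2) * b (i - 2) ≥ b i) :=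
  bass_number_differences_from_rational_expression'_general R cp l hl f g hg hf s c hc0 hc1 hc2 hcnn
    hserre b hb
end
end

section
/- Let k be a field and let B be the 7-dimensional graded-commutative graded k-algebra with homogeneous basis 1 (degree 0), a_1, a_2 (degree 1), a_3, b_1, b_2 (degree 2), b_3 (degree 3), whose only nonzero products of basis elements (besides those with 1) are a_1a_2 = -a_2a_1 = a_3 and a_1b_2 = a_2b_1 = b_1a_2 = b_2a_1 = b_3 (this is B = C ⋉ ΣC_+, the trivial extension of the exterior algebra C = Λ_k(ka_1 ⊕ ka_2) on two degree-1 generators by the suspension of its augmentation ideal). Let B* = Hom_k(B,k) be the graded dual, a graded B-module via (xμ)(m) = (-1)^{ij}μ(xm) for x ∈ B_i and μ ∈ (B*)_j, and for an integer s let Σ^s denote the grading shift (Σ^s M)_j = M_{j-s} with the standard sign conventions on the B-action. Then there is an exact sequence of graded B-modules 0 → Σ^{-2}B_+ ⊕ Σ^{-1}k → Σ^{-2}B ⊕ Σ^{-3}B → B* → 0, where B_+ = B_{≥1} and k carries the trivial B-module structure. -/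
/-!
Write `g (p, q)` for the functional `m ↦ [pm]_{a₃} + [qm]_{b₃}`, where `[-]_{a₃}, [-]_{b₃}` are
the coordinates along the two socle vectors. Every dual basis vector is such a functional, so
`g : B ⊕ B → B*` is onto and its kernel has dimension `14 - 7 = 7`. The signed suspension
`S : a₁ ↦ -b₁, a₂ ↦ b₂, a₃ ↦ -b₃` satisfies `[pm]_{a₃} + [S(p) m]_{b₃} = 0` for `p ∈ B₊`, and
`[a₃ m]_{b₃} = 0`, so the injective map `f (p, c) = (p, S p + c a₃)` from the `7`-dimensional
space `B₊ ⊕ k` lands in, hence onto, `ker g`. Its signs are exactly those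
making `S (x p) = (-1)^{|x|} x S(p)`, which is the `B`-linearity of `f`; that of `g` is graded
commutativity. All these identities are bilinear, so they reduce to the multiplication table.
-/

noncomputable section

/-- The degrees of the seven basis elements `1, a₁, a₂, a₃, b₁, b₂, b₃` of the algebra
`B = C ⋉ ΣC₊` (indices `0,…,6`). -/
def degOf : Fin 7 → ℕ := ![0, 1, 1, 2, 2, 2, 3]

/-- The degree-`i` homogeneous component of `B`: the span of the basis vectors of
degree `i`. -/
def homogPart (k : Type) [Field k] (B : Type) [Ring B] [Algebra k B]
    (e : Fin 7 → B) (i : ℕ) : Submodule k B :=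
  Submodule.span k (e '' {j | degOf j = i})

/-- `B₊ = B_{≥1}`, the span of the basis vectors of positive degree. -/
def posPart (k : Type) [Field k] (B : Type) [Ring B] [Algebra k B]
    (e : Fin 7 → B) : Submodule k B :=
  Submodule.span k (e '' {j | 1 ≤ (j : ℕ)})

theorem LinearMap.eqOn_span₂ {R M N P : Type*} [CommSemiring R] [AddCommMonoid M]
    [AddCommMonoid N] [AddCommMonoid P] [Module R M] [Module R N] [Module R P]
    {s : Set M} {t : Set N} {f g : M →ₗ[R] N →ₗ[R] P}
    (h : ∀ x ∈ s, ∀ y ∈ t, f x y = g x y) {x : M} {y : N}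
    (hx : x ∈ Submodule.span R s) (hy : y ∈ Submodule.span R t) : f x y = g x y :=
  LinearMap.eqOn_span (f := f.flip y) (g := g.flip y)
    (fun x' hx' => LinearMap.eqOn_span (h x' hx') hy) hx

theorem LinearMap.range_eq_ker_of_finrank_add_eq {K U V W : Type*} [DivisionRing K]
    [AddCommGroup U] [AddCommGroup V] [AddCommGroup W] [Module K U] [Module K V] [Module K W]
    [FiniteDimensional K V]
    {f : U →ₗ[K] V} {g : V →ₗ[K] W} (hf : Function.Injective f) (hg : Function.Surjective g)
    (hgf : g ∘ₗ f = 0) (hdim : Module.finrank K U + Module.finrank K W = Module.finrank K V) :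
    LinearMap.range f = LinearMap.ker g := by
  refine Submodule.eq_of_le_of_finrank_eq (LinearMap.range_le_ker_iff.mpr hgf) ?_
  have hrank := g.finrank_range_add_finrank_ker
  rw [LinearMap.range_eq_top.mpr hg, finrank_top] at hrank
  have : FiniteDimensional K U := Module.Finite.of_injective f hf
  rw [LinearMap.finrank_range_of_inj hf]
  omega

def mulTable {B : Type*} [Zero B] [Neg B] (e : Fin 7 → B) : Fin 7 → Fin 7 → B :=
  ![![e 0, e 1,  e 2, e 3, e 4, e 5, e 6],
    ![e 1, 0,    e 3, 0,   0,   e 6, 0],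
    ![e 2, -e 3, 0,   0,   e 6, 0,   0],
    ![e 3, 0,    0,   0,   0,   0,   0],
    ![e 4, 0,    e 6, 0,   0,   0,   0],
    ![e 5, e 6,  0,   0,   0,   0,   0],
    ![e 6, 0,    0,   0,   0,   0,   0]]

theorem mul_eq_mulTable {B : Type*} [Ring B] (e : Fin 7 → B) (he0 : e 0 = 1)
    (h12 : e 1 * e 2 = e 3) (h21 : e 2 * e 1 = -e 3) (h15 : e 1 * e 5 = e 6)
    (h51 : e 5 * e 1 = e 6) (h24 : e 2 * e 4 = e 6) (h42 : e 4 * e 2 = e 6)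
    (hzero : ∀ i j : Fin 7, 1 ≤ (i : ℕ) → 1 ≤ (j : ℕ) →
      ((i : ℕ), (j : ℕ)) ∉ ({(1,2), (2,1), (1,5), (5,1), (2,4), (4,2)} : Set (ℕ × ℕ)) →
      e i * e j = 0) (i j : Fin 7) :
    e i * e j = mulTable e i j := by
  fin_cases i <;> fin_cases j <;>
    simp [mulTable, he0, h12, h21, h15, h51, h24, h42] <;>
    exact hzero _ _ (by decide) (by decide) (by simp)

section

variable {k B : Type} [Field k] [Ring B] [Algebra k B] (e : Module.Basis (Fin 7) k B)

theorem basis_mem_homogPart {j : Fin 7} {d : ℕ} (hj : degOf j = d) : e j ∈ homogPart k B e d :=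
  Submodule.subset_span ⟨j, hj, rfl⟩

theorem coord_eq_zero_of_mem_homogPart {d : ℕ} {y : B} (hy : y ∈ homogPart k B e d) {j : Fin 7}
    (hj : degOf j ≠ d) : e.coord j y = 0 := by
  refine (Submodule.span_le (p := LinearMap.ker (e.coord j))).mpr ?_ hy
  rintro _ ⟨u, hu, rfl⟩
  have : u ≠ j := by rintro rfl; exact hj hu
  simp [this]

theorem finrank_posPart : Module.finrank k (posPart k B e) = 6 := by
  unfold _root_.posPart
  rw [Set.image_eq_range]
  exact (finrank_span_eq_card (e.linearIndependent.comp _ Subtype.val_injective)).trans rfl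

theorem homogPart_mul_le (hmul : ∀ i j, e i * e j = mulTable e i j) (a m : ℕ) :
    homogPart k B e a * homogPart k B e m ≤ homogPart k B e (a + m) := by
  rw [homogPart, homogPart, Submodule.span_mul_span, Submodule.span_le]
  rintro _ ⟨_, ⟨u, rfl, rfl⟩, _, ⟨v, rfl, rfl⟩, rfl⟩
  fin_cases u <;> fin_cases v <;> simp only [hmul, mulTable] <;> simp <;>
    exact basis_mem_homogPart e (by decide)

theorem mul_comm_of_mem_homogPart (hmul : ∀ i j, e i * e j = mulTable e i j) {i a : ℕ} {x p : B}
    (hx : x ∈ homogPart k B e i) (hp : p ∈ homogPart k B e a) :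
    x * p = (-1 : k) ^ (i * a) • (p * x) := by
  refine LinearMap.eqOn_span₂ (f := LinearMap.mul k B)
    (g := (-1 : k) ^ (i * a) • (LinearMap.mul k B).flip) ?_ hx hp
  rintro _ ⟨u, rfl, rfl⟩ _ ⟨v, rfl, rfl⟩
  fin_cases u <;> fin_cases v <;> simp [hmul, mulTable, degOf]

theorem mul_basis_three_eq_zero (hmul : ∀ i j, e i * e j = mulTable e i j) {i : ℕ}
    (hi : 1 ≤ i) {x : B} (hx : x ∈ homogPart k B e i) : x * e 3 = 0 := by
  refine (Submodule.span_le (p := LinearMap.ker (LinearMap.mulRight k (e 3)))).mpr ?_ hx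
  rintro _ ⟨u, rfl, rfl⟩
  fin_cases u <;> simp [hmul, mulTable, degOf] at hi ⊢

def signedSusp : B →ₗ[k] B := e.constr k ![0, -e 4, e 5, -e 6, 0, 0, 0]

theorem signedSusp_basis (j : Fin 7) :
    signedSusp e (e j) = ![0, -e 4, e 5, -e 6, 0, 0, 0] j :=
  e.constr_basis k _ j

theorem signedSusp_mem_homogPart {a : ℕ} {x : B} (hx : x ∈ homogPart k B e a) :
    signedSusp e x ∈ homogPart k B e (a + 1) := by
  refine (Submodule.span_le (p := (homogPart k B e (a + 1)).comap (signedSusp e))).mpr ?_ hx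
  rintro _ ⟨u, rfl, rfl⟩
  fin_cases u <;> simp [signedSusp_basis] <;> exact basis_mem_homogPart e (by decide)

theorem signedSusp_mul (hmul : ∀ i j, e i * e j = mulTable e i j) {i : ℕ} {x p : B}
    (hx : x ∈ homogPart k B e i) (hp : p ∈ posPart k B e) :
    signedSusp e (x * p) = (-1 : k) ^ i • (x * signedSusp e p) := by
  have key := LinearMap.eqOn_span₂ (f := (LinearMap.mul k B).compr₂ (signedSusp e))
    (g := (-1 : k) ^ i • (LinearMap.mul k B).compl₂ (signedSusp e)) ?_ hx hp
  · simpa using key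
  rintro _ ⟨u, rfl, rfl⟩ _ ⟨v, hv, rfl⟩
  fin_cases u <;> fin_cases v <;> simp [hmul, mulTable, degOf, signedSusp_basis] at hv ⊢

def pairingMap : B × B →ₗ[k] Module.Dual k B :=
  ((LinearMap.mul k B).compr₂ (e.coord 3)).coprod ((LinearMap.mul k B).compr₂ (e.coord 6))

@[simp]
theorem pairingMap_apply (p q m : B) :
    pairingMap e (p, q) m = e.coord 3 (p * m) + e.coord 6 (q * m) := rfl

def graphMap : posPart k B e × k →ₗ[k] B × B :=
  ((posPart k B e).subtype ∘ₗ LinearMap.fst k _ k).prod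
    (signedSusp e ∘ₗ (posPart k B e).subtype ∘ₗ LinearMap.fst k _ k +
      LinearMap.toSpanSingleton k B (e 3) ∘ₗ LinearMap.snd k _ k)

@[simp]
theorem graphMap_apply (p : posPart k B e) (c : k) :
    graphMap e (p, c) = ((p : B), signedSusp e p + c • e 3) := rfl

theorem graphMap_injective : Function.Injective (graphMap e) := by
  rintro ⟨p, c⟩ ⟨q, d⟩ h
  simp only [graphMap_apply, Prod.mk.injEq] at h
  obtain ⟨hpq, hcd⟩ := h
  obtain rfl := Subtype.ext hpq
  simpa using smul_left_injective k (e.ne_zero 3) (add_left_cancel hcd)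

theorem pairingMap_signedSusp (hmul : ∀ i j, e i * e j = mulTable e i j) {p : B}
    (hp : p ∈ posPart k B e) : pairingMap e (p, signedSusp e p) = 0 := by
  refine (Submodule.span_le (p := LinearMap.ker
    (pairingMap e ∘ₗ LinearMap.id.prod (signedSusp e)))).mpr ?_ hp
  rintro _ ⟨u, hu, rfl⟩
  refine e.ext fun v => ?_
  fin_cases u <;> fin_cases v <;> simp [hmul, mulTable, signedSusp_basis] at hu ⊢

theorem pairingMap_zero_basis_three (hmul : ∀ i j, e i * e j = mulTable e i j) :
    pairingMap e (0, e 3) = 0 :=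
  e.ext fun v => by fin_cases v <;> simp [hmul, mulTable]

theorem pairingMap_comp_graphMap (hmul : ∀ i j, e i * e j = mulTable e i j) :
    pairingMap e ∘ₗ graphMap e = 0 := by
  refine LinearMap.ext fun ⟨p, c⟩ => ?_
  have split : graphMap e (p, c) = ((p : B), signedSusp e p) + c • (0, e 3) := by simp
  simp only [LinearMap.comp_apply, LinearMap.zero_apply, split, map_add, map_smul,
    pairingMap_signedSusp e hmul p.2, pairingMap_zero_basis_three e hmul, smul_zero, add_zero]

theorem pairingMap_surjective (hmul : ∀ i j, e i * e j = mulTable e i j) :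
    Function.Surjective (pairingMap e) := by
  rw [← LinearMap.range_eq_top, eq_top_iff, ← e.dualBasis.span_eq, Submodule.span_le]
  rintro _ ⟨v, rfl⟩
  refine ⟨![(0, e 6), (0, e 5), (e 1, 0), (e 0, 0), (0, e 2), (0, e 1), (0, e 0)] v,
    e.ext fun w => ?_⟩
  fin_cases v <;> fin_cases w <;> simp [hmul, mulTable]

theorem range_graphMap_eq_ker_pairingMap (hmul : ∀ i j, e i * e j = mulTable e i j) :
    LinearMap.range (graphMap e) = LinearMap.ker (pairingMap e) := by
  have : Module.Finite k B := Module.Finite.of_basis e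
  refine LinearMap.range_eq_ker_of_finrank_add_eq (graphMap_injective e)
    (pairingMap_surjective e hmul) (pairingMap_comp_graphMap e hmul) ?_
  simp [Module.finrank_prod, finrank_posPart, Subspace.dual_finrank_eq,
    Module.finrank_eq_card_basis e]

end

/-- Let `B = C ⋉ ΣC₊` be the 7-dimensional graded-commutative
`k`-algebra with basis `1, a₁, a₂ (deg 1), a₃, b₁, b₂ (deg 2), b₃ (deg 3)` and nonzero
products `a₁a₂ = -a₂a₁ = a₃`, `a₁b₂ = a₂b₁ = b₁a₂ = b₂a₁ = b₃`.  Then there is an exact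
sequence of graded `B`-modules
`0 → Σ⁻²B₊ ⊕ Σ⁻¹k → Σ⁻²B ⊕ Σ⁻³B → B* → 0`.

Here the underlying `k`-linear maps `f` and `g` are required to be injective resp.
surjective with `range f = ker g` (exactness), to respect the gradings induced by the
indicated suspensions (where `(B*)_j = Hom_k(B_{-j},k)`), and to be `B`-linear with
respect to the `B`-actions on the suspensions `Σˢ` (sign `(-1)^{is}` for `x ∈ B_i`) and
on the graded dual `B*` (sign `(xμ)(m) = (-1)^{ij} μ(xm)`); the `B`-linearity conditions
are expressed elementwise on homogeneous elements, with the resulting explicit signs. -/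
theorem exact_sequence_for_class_B
    (k : Type) [Field k] (B : Type) [Ring B] [Algebra k B]
    (e : Module.Basis (Fin 7) k B)
    (he0 : e 0 = 1)
    (h12 : e 1 * e 2 = e 3)
    (h21 : e 2 * e 1 = - e 3)
    (h15 : e 1 * e 5 = e 6)
    (h51 : e 5 * e 1 = e 6)
    (h24 : e 2 * e 4 = e 6)
    (h42 : e 4 * e 2 = e 6)
    (hzero : ∀ i j : Fin 7, 1 ≤ (i : ℕ) → 1 ≤ (j : ℕ) →
      ((i : ℕ), (j : ℕ)) ∉ ({(1,2), (2,1), (1,5), (5,1), (2,4), (4,2)} : Set (ℕ × ℕ)) →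
      e i * e j = 0) :
    ∃ (f : (↥(posPart k B ⇑e) × k) →ₗ[k] B × B)
      (g : (B × B) →ₗ[k] Module.Dual k B),
      -- exactness of `0 → Σ⁻²B₊ ⊕ Σ⁻¹k → Σ⁻²B ⊕ Σ⁻³B → B* → 0`:
      Function.Injective f ∧
      Function.Surjective g ∧
      LinearMap.range f = LinearMap.ker g ∧
      -- `f` has degree `0` for the indicated suspensions:
      (∀ (a : ℕ) (p : ↥(posPart k B ⇑e)), (p : B) ∈ homogPart k B ⇑e a →
        (f (p, 0)).1 ∈ homogPart k B ⇑e a ∧ (f (p, 0)).2 ∈ homogPart k B ⇑e (a + 1)) ∧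
      (∀ c : k, (f (0, c)).1 ∈ homogPart k B ⇑e 1 ∧ (f (0, c)).2 ∈ homogPart k B ⇑e 2) ∧
      -- `f` is `B`-linear (with the suspension sign conventions):
      (∀ (i : ℕ) (x : B), x ∈ homogPart k B ⇑e i →
        ∀ (p q : ↥(posPart k B ⇑e)), (q : B) = x * (p : B) →
          f (q, 0) = (x * (f (p, 0)).1, ((-1 : k) ^ i) • (x * (f (p, 0)).2))) ∧
      (∀ (i : ℕ) (x : B), 1 ≤ i → x ∈ homogPart k B ⇑e i → ∀ c : k,
        (x * (f (0, c)).1, ((-1 : k) ^ i) • (x * (f (0, c)).2)) = ((0 : B), (0 : B))) ∧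
      -- `g` has degree `0`: `g(Σ⁻²B_a) ⊆ (B*)_{a-2}` and `g(Σ⁻³B_b) ⊆ (B*)_{b-3}`:
      (∀ (a : ℕ) (p : B), p ∈ homogPart k B ⇑e a →
        ∀ (m : ℕ) (y : B), y ∈ homogPart k B ⇑e m → (m : ℤ) ≠ 2 - (a : ℤ) →
          g (p, 0) y = 0) ∧
      (∀ (b : ℕ) (q : B), q ∈ homogPart k B ⇑e b →
        ∀ (m : ℕ) (y : B), y ∈ homogPart k B ⇑e m → (m : ℤ) ≠ 3 - (b : ℤ) →
          g (0, q) y = 0) ∧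
      -- `g` is `B`-linear (with the suspension and graded-dual sign conventions):
      (∀ (i a : ℕ) (x p : B), x ∈ homogPart k B ⇑e i → p ∈ homogPart k B ⇑e a →
        ∀ m : B, g (x * p, 0) m = ((-1 : k) ^ (i * a)) • g (p, 0) (x * m)) ∧
      (∀ (i b : ℕ) (x q : B), x ∈ homogPart k B ⇑e i → q ∈ homogPart k B ⇑e b →
        ∀ m : B, g (0, x * q) m = ((-1 : k) ^ (i * b)) • g (0, q) (x * m)) := by
  have hmul := mul_eq_mulTable (⇑e) he0 h12 h21 h15 h51 h24 h42 hzero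
  refine ⟨graphMap e, pairingMap e, graphMap_injective e, pairingMap_surjective e hmul,
    range_graphMap_eq_ker_pairingMap e hmul, ?_, ?_, ?_, ?_, ?_, ?_, ?_, ?_⟩
  · exact fun a p hp => ⟨by simpa using hp, by simpa using signedSusp_mem_homogPart e hp⟩
  · exact fun c => ⟨by simp,
      by simpa using Submodule.smul_mem _ c (basis_mem_homogPart e (show degOf 3 = 2 from rfl))⟩
  · intro i x hx p q hq
    simp [hq, signedSusp_mul e hmul hx p.2]
  · intro i x hi hx c
    simp only [graphMap_apply, ZeroMemClass.coe_zero, map_zero, zero_add, mul_zero,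
      mul_smul_comm, mul_basis_three_eq_zero e hmul hi hx, smul_zero]
  · intro a p hp m y hy hne
    simpa using coord_eq_zero_of_mem_homogPart e
      (homogPart_mul_le e hmul a m (Submodule.mul_mem_mul hp hy))
      (j := 3) (by simp [degOf]; omega)
  · intro b q hq m y hy hne
    simpa using coord_eq_zero_of_mem_homogPart e
      (homogPart_mul_le e hmul b m (Submodule.mul_mem_mul hq hy))
      (j := 6) (by simp [degOf]; omega)
  · intro i a x p hx hp m
    simp [mul_comm_of_mem_homogPart e hmul hx hp, mul_assoc]
  · intro i b x q hx hq m
    simp [mul_comm_of_mem_homogPart e hmul hx hq, mul_assoc]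

end
end
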